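/- Let v₀ > 0 and let X : [0,∞) → [0,∞) be continuous with X_0 = v₀. Let F : [v₀,∞) → ℝ be continuously differentiable with F' > 0 on [v₀,∞), with inverse K := F^{−1}, and define w(y) := y − K(y)/K'(y) on the range of F. Then the Azéma–Yor process Y_t := M^F_t(X) satisfies the drawdown property Y_t ≥ w(sup_{u ∈ [0,t]} Y_u) for all t ≥ 0. -/

import Mathlib

/-!
The running supremum `S = X̄_t` is attained at some time `s ≤ t`, where `Y_s = F(S)`; at every
other time `u ≤ t` we have `Y_u ≤ F(X̄_u) ≤ F(S)` because `F` is increasing. Hence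
`Ȳ_t = F(S)`, and `K(F S) / K'(F S) = S F'(S)` turns the claim into `F'(S) X_t ≥ 0`.
-/

open Filter Set

/-- Running supremum `X̄_t = sup_{u ∈ [0,t]} X_u` of a path `X`. -/
noncomputable def runSup (X : ℝ → ℝ) (t : ℝ) : ℝ := sSup (X '' Set.Icc 0 t)

/-- Azéma–Yor process `M^F_t(X) = F(X̄_t) - F'(X̄_t)(X̄_t - X_t)`. -/
noncomputable def AY (F F' X : ℝ → ℝ) (t : ℝ) : ℝ :=
  F (runSup X t) - F' (runSup X t) * (runSup X t - X t)

lemma monotoneOn_Ici_of_hasDerivAt_nonneg {F F' : ℝ → ℝ} {a : ℝ}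
    (hF : ∀ x, a ≤ x → HasDerivAt F (F' x) x) (hF' : ∀ x, a ≤ x → 0 ≤ F' x) :
    MonotoneOn F (Ici a) :=
  monotoneOn_of_hasDerivWithinAt_nonneg (convex_Ici a)
    (fun x hx => (hF x hx).continuousAt.continuousWithinAt)
    (fun x hx => (hF x (interior_subset hx)).hasDerivWithinAt)
    (fun x hx => hF' x (interior_subset hx))

section RunningSup

variable {X : ℝ → ℝ} {t u : ℝ}

lemma bddAbove_image_Icc (hX : ContinuousOn X (Ici 0)) (t : ℝ) : BddAbove (X '' Icc 0 t) :=
  (isCompact_Icc.image_of_continuousOn (hX.mono Icc_subset_Ici_self)).bddAbove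

lemma le_runSup (hX : ContinuousOn X (Ici 0)) (hu : u ∈ Icc 0 t) : X u ≤ runSup X t :=
  le_csSup (bddAbove_image_Icc hX t) (mem_image_of_mem X hu)

lemma runSup_mono (hX : ContinuousOn X (Ici 0)) (hu : 0 ≤ u) (hut : u ≤ t) :
    runSup X u ≤ runSup X t :=
  csSup_le_csSup (bddAbove_image_Icc hX t) ((nonempty_Icc.2 hu).image X)
    (image_mono (Icc_subset_Icc_right hut))

lemma exists_eq_runSup (hX : ContinuousOn X (Ici 0)) (ht : 0 ≤ t) :
    ∃ s ∈ Icc 0 t, X s = runSup X t :=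
  (isCompact_Icc.image_of_continuousOn (hX.mono Icc_subset_Ici_self)).sSup_mem
    ((nonempty_Icc.2 ht).image X)

end RunningSup

section AzemaYor

variable {F F' X : ℝ → ℝ} {v₀ t u : ℝ}

lemma AY_le (hXu : X u ≤ runSup X u) (hF' : 0 ≤ F' (runSup X u)) :
    AY F F' X u ≤ F (runSup X u) := by
  have : 0 ≤ F' (runSup X u) * (runSup X u - X u) := mul_nonneg hF' (sub_nonneg.2 hXu)
  unfold AY
  linarith

lemma AY_of_eq_runSup (h : X u = runSup X u) : AY F F' X u = F (runSup X u) := by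
  simp [AY, h]

theorem runSup_AY (hX : ContinuousOn X (Ici 0)) (hX0 : X 0 = v₀)
    (hF : MonotoneOn F (Ici v₀)) (hF' : ∀ x, v₀ ≤ x → 0 ≤ F' x) (ht : 0 ≤ t) :
    runSup (AY F F' X) t = F (runSup X t) := by
  have hv₀ : ∀ u ∈ Icc 0 t, v₀ ≤ runSup X u := fun u hu => hX0 ▸ le_runSup hX ⟨le_rfl, hu.1⟩
  obtain ⟨s, hs, hXs⟩ := exists_eq_runSup hX ht
  have hSs : runSup X s = runSup X t :=
    le_antisymm (runSup_mono hX hs.1 hs.2) (hXs ▸ le_runSup hX ⟨hs.1, le_rfl⟩)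
  refine IsGreatest.csSup_eq ⟨⟨s, hs, ?_⟩, ?_⟩
  · rw [AY_of_eq_runSup (hXs.trans hSs.symm), hSs]
  · rintro _ ⟨u, hu, rfl⟩
    calc AY F F' X u ≤ F (runSup X u) := AY_le (le_runSup hX ⟨hu.1, le_rfl⟩) (hF' _ (hv₀ u hu))
      _ ≤ F (runSup X t) := hF (hv₀ u hu) (hv₀ t ⟨ht, le_rfl⟩) (runSup_mono hX hu.1 hu.2)

end AzemaYor

theorem stmt_15_general (v₀ : ℝ) (X F F' K K' : ℝ → ℝ)
    (hX : ContinuousOn X (Set.Ici 0))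
    (hXnonneg : ∀ t : ℝ, 0 ≤ t → 0 ≤ X t)
    (hX0 : X 0 = v₀)
    (hF : ∀ x : ℝ, v₀ ≤ x → HasDerivAt F (F' x) x)
    (hF'pos : ∀ x : ℝ, v₀ ≤ x → 0 < F' x)
    (hKF : ∀ x : ℝ, v₀ ≤ x → K (F x) = x)
    (hK'F : ∀ x : ℝ, v₀ ≤ x → K' (F x) = 1 / F' x) :
    ∀ t : ℝ, 0 ≤ t →
      runSup (AY F F' X) t - K (runSup (AY F F' X) t) / K' (runSup (AY F F' X) t)
        ≤ AY F F' X t := by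
  intro t ht
  have hF'nonneg : ∀ x, v₀ ≤ x → 0 ≤ F' x := fun x hx => (hF'pos x hx).le
  have hS : v₀ ≤ runSup X t := hX0 ▸ le_runSup hX ⟨le_rfl, ht⟩
  rw [runSup_AY hX hX0 (monotoneOn_Ici_of_hasDerivAt_nonneg hF hF'nonneg) hF'nonneg ht,
    hKF _ hS, hK'F _ hS, div_div_eq_mul_div, div_one]
  have : 0 ≤ F' (runSup X t) * X t := mul_nonneg (hF'nonneg _ hS) (hXnonneg t ht)
  unfold AY
  linarith

/-- Drawdown property of Azéma–Yor processes: for a nonnegative continuous path `X`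
with `X_0 = v₀`, `F` continuously differentiable with `F' > 0` on `[v₀,∞)`, inverse
`K = F⁻¹` (with `K'(F(x)) = 1/F'(x)`) and `w(y) = y - K(y)/K'(y)`, the process
`Y = M^F(X)` satisfies `Y_t ≥ w(Ȳ_t)` for all `t ≥ 0`. -/
theorem stmt_15 (v₀ : ℝ) (hv₀ : 0 < v₀) (X F F' K K' : ℝ → ℝ)
    (hX : ContinuousOn X (Set.Ici 0))
    (hXnonneg : ∀ t : ℝ, 0 ≤ t → 0 ≤ X t)
    (hX0 : X 0 = v₀)
    (hF : ∀ x : ℝ, v₀ ≤ x → HasDerivAt F (F' x) x)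
    (hF'cont : ContinuousOn F' (Set.Ici v₀))
    (hF'pos : ∀ x : ℝ, v₀ ≤ x → 0 < F' x)
    (hKF : ∀ x : ℝ, v₀ ≤ x → K (F x) = x)
    (hK'F : ∀ x : ℝ, v₀ ≤ x → K' (F x) = 1 / F' x) :
    ∀ t : ℝ, 0 ≤ t →
      runSup (AY F F' X) t - K (runSup (AY F F' X) t) / K' (runSup (AY F F' X) t)
        ≤ AY F F' X t :=
  stmt_15_general v₀ X F F' K K' hX hXnonneg hX0 hF hF'pos hKF hK'F
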